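/- arXiv:2207.13164 — 2 statements merged into one kernel-verified Lean document; each statement's English description precedes it below -/
import Mathlib

section
/- Let A be a C*-algebra, let N be a full Hilbert A-module with A-valued inner product ⟨·,·⟩, let M be a full closed A-submodule of N with M⊥ = {0} in N, and suppose r0 : N → A is a nonzero bounded A-linear functional vanishing on M. Set ⟨x,y⟩₂ := ⟨x,y⟩ + r0(x)*·r0(y). Then there exists no bounded bijective A-linear operator T : N → N that is adjointable with respect to ⟨·,·⟩ and positive (i.e. ⟨T x, x⟩ ≥ 0 in A for all x ∈ N) such that ⟨T x, y⟩ = ⟨x,y⟩₂ for all x, y ∈ N; in particular the two inner products ⟨·,·⟩ and ⟨·,·⟩₂ are not unitarily equivalent. -/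
open scoped RightActions

/-- The Hilbert C⋆-module class as it stood in Mathlib of December 2024: a right `A`-module
(action of `Aᵐᵒᵖ`) with inner product `A`-linear on the right, `⟪x, y <• a⟫ = ⟪x, y⟫ * a`. -/
class CStarModuleRight (A E : Type*) [NonUnitalSemiring A] [StarRing A] [Module ℂ A]
    [AddCommGroup E] [Module ℂ E] [PartialOrder A] [SMul Aᵐᵒᵖ E] [Norm A] [Norm E]
    extends Inner A E where
  inner_add_right {x} {y} {z} : inner x (y + z) = inner x y + inner x z
  inner_self_nonneg {x} : 0 ≤ inner x x
  inner_self {x} : inner x x = 0 ↔ x = 0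
  inner_op_smul_right {a : A} {x y : E} : inner x (y <• a) = inner x y * a
  inner_smul_right_complex {z : ℂ} {x} {y} : inner x (z • y) = z • inner x y
  star_inner x y : star (inner x y) = inner y x
  norm_eq_sqrt_norm_inner_self x : ‖x‖ = √‖inner x x‖

/-- Let `A` be a C*-algebra, `N` a full Hilbert `A`-module, `M` a full closed
`A`-submodule with `M⊥ = {0}` in `N`, and `r0 : N → A` a nonzero bounded `A`-linear
functional vanishing on `M`.  Set `⟪x,y⟫₂ := ⟪x,y⟫ + r0(x)* ⬝ r0(y)`.  Then there is
no bounded bijective `A`-linear operator `T : N → N`, adjointable with respect to the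
original inner product and positive, such that `⟪T x, y⟫ = ⟪x,y⟫₂` for all `x, y`;
in particular the two inner products are not unitarily equivalent. -/
theorem perturbed_inner_product_not_equivalent
    {A : Type*} [CStarAlgebra A] [PartialOrder A] [StarOrderedRing A]
    {N : Type*} [NormedAddCommGroup N] [NormedSpace ℂ N] [SMul Aᵐᵒᵖ N] [CStarModuleRight A N]
    [CompleteSpace N]
    -- `N` is full
    (hNfull : (Submodule.span ℂ
      {a : A | ∃ x y : N, a = inner (𝕜 := A) x y}).topologicalClosure = ⊤)
    -- `M` is a closed `A`-submodule of `N`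
    (M : Submodule ℂ N) (hMclosed : IsClosed (M : Set N))
    (hMsmul : ∀ (a : A), ∀ m ∈ M, m <• a ∈ M)
    -- `M` is full
    (hMfull : (Submodule.span ℂ
      {a : A | ∃ x ∈ M, ∃ y ∈ M, a = inner (𝕜 := A) x y}).topologicalClosure = ⊤)
    -- `M⊥ = {0}` in `N`
    (hMbot : ∀ n : N, (∀ m ∈ M, inner (𝕜 := A) m n = 0) → n = 0)
    -- `r0` is a nonzero bounded `A`-linear functional on `N` vanishing on `M`
    (r0 : N → A) (hr0cont : Continuous r0)
    (hr0add : ∀ x y : N, r0 (x + y) = r0 x + r0 y)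
    (hr0mod : ∀ (x : N) (a : A), r0 (x <• a) = r0 x * a)
    (hr0ne : ∃ x : N, r0 x ≠ 0)
    (hr0M : ∀ m ∈ M, r0 m = 0)
    -- the perturbed inner product
    (inner₂ : N → N → A) (hinner₂ : ∀ x y : N,
      inner₂ x y = inner (𝕜 := A) x y + star (r0 x) * r0 y) :
    ¬ ∃ T : N → N,
      -- bounded (continuous) `A`-linear
      Continuous T ∧ (∀ x y : N, T (x + y) = T x + T y) ∧
      (∀ (x : N) (a : A), T (x <• a) = T x <• a) ∧
      -- bijective
      Function.Bijective T ∧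
      -- adjointable with respect to the original inner product
      (∃ S : N → N, Continuous S ∧ (∀ x y : N, S (x + y) = S x + S y) ∧
        (∀ (x : N) (a : A), S (x <• a) = S x <• a) ∧
        (∀ x y : N, inner (𝕜 := A) (T x) y = inner (𝕜 := A) x (S y))) ∧
      -- positive with respect to the original inner product
      (∀ x : N, 0 ≤ inner (𝕜 := A) (T x) x) ∧
      -- implementing the perturbed inner product
      (∀ x y : N, inner (𝕜 := A) (T x) y = inner₂ x y) := by
  rintro ⟨T, -, -, -, -, ⟨S, -, -, -, hadj⟩, -, heq⟩
  -- S = id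
  have hS : ∀ y : N, S y = y := by
    intro y
    have h0 : ∀ m ∈ M, inner (𝕜 := A) m (S y - y) = 0 := by
      intro m hm
      have h1 : inner (𝕜 := A) m (S y) = inner (𝕜 := A) m y := by
        rw [← hadj m y, heq m y, hinner₂ m y, hr0M m hm]
        simp
      have h4 := CStarModuleRight.inner_add_right (A := A) (x := m) (y := S y - y) (z := y)
      rw [sub_add_cancel, h1] at h4
      simpa using h4.symm
    exact sub_eq_zero.mp (hMbot _ h0)
  obtain ⟨x, hx⟩ := hr0ne
  have h2 : inner (𝕜 := A) x x + star (r0 x) * r0 x = inner (𝕜 := A) x x := by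
    rw [← hinner₂ x x, ← heq x x, hadj x x, hS x]
  have h3 : star (r0 x) * r0 x = 0 := by
    have := add_right_cancel (a := star (r0 x) * r0 x) (b := inner (𝕜 := A) x x) (c := 0)
    rw [add_comm] at h2
    simpa using congrArg (fun z => z - inner (𝕜 := A) x x) h2
  exact hx ((CStarRing.star_mul_self_eq_zero_iff _).mp h3)
end

section
/- Let A be a von Neumann algebra, let N be a Hilbert A-module and let M be a closed A-submodule of N with M⊥ = {0} in N. If T : N → N is a bounded A-linear adjointable operator such that y·⟨x, T(z)⟩ = 0 for all x, y ∈ M and all z ∈ N (i.e. θ_{x,y} ∘ T = 0 for all x, y ∈ M), then T = 0. -/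
open scoped RightActions

universe u

/-- A C⋆-algebra is a von Neumann algebra if it is ⋆-isomorphic to a concrete
von Neumann algebra (in the sense of Mathlib's `VonNeumannAlgebra`) acting on
some complex Hilbert space. -/
def IsVonNeumannAlgebra (A : Type u) [CStarAlgebra A] : Prop :=
  ∃ (H : Type u) (_ : NormedAddCommGroup H) (_ : InnerProductSpace ℂ H) (_ : CompleteSpace H)
    (W : VonNeumannAlgebra H), Nonempty (A ≃⋆ₐ[ℂ] W.toStarSubalgebra)

/-- Let `A` be a von Neumann algebra, `N` a Hilbert `A`-module, `M` a closed
`A`-submodule with `M⊥ = {0}` in `N`.  If `T : N → N` is a bounded `A`-linear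
adjointable operator with `θ_{x,y} ∘ T = 0` for all `x, y ∈ M`, then `T = 0`. -/
theorem adjointable_operator_eq_zero_of_theta_comp_eq_zero
    {A : Type u} [CStarAlgebra A] [PartialOrder A] [StarOrderedRing A]
    (hA : IsVonNeumannAlgebra A)
    {N : Type*} [NormedAddCommGroup N] [NormedSpace ℂ N] [SMul Aᵐᵒᵖ N] [CStarModuleRight A N]
    [CompleteSpace N]
    -- `M` is a closed `A`-submodule of `N`
    (M : Submodule ℂ N) (hMclosed : IsClosed (M : Set N))
    (hMsmul : ∀ (a : A), ∀ m ∈ M, m <• a ∈ M)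
    -- `M⊥ = {0}` in `N`
    (hMbot : ∀ n : N, (∀ m ∈ M, inner (𝕜 := A) m n = 0) → n = 0)
    -- `T` is a bounded `A`-linear operator on `N`
    (T : N → N) (hTcont : Continuous T)
    (hTadd : ∀ x y : N, T (x + y) = T x + T y)
    (hTmod : ∀ (x : N) (a : A), T (x <• a) = T x <• a)
    -- `T` is adjointable
    (hTadj : ∃ S : N → N, Continuous S ∧ (∀ x y : N, S (x + y) = S x + S y) ∧
      (∀ (x : N) (a : A), S (x <• a) = S x <• a) ∧
      (∀ x y : N, inner (𝕜 := A) (T x) y = inner (𝕜 := A) x (S y)))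
    -- `θ_{x,y} ∘ T = 0` for all `x, y ∈ M`
    (hT0 : ∀ x ∈ M, ∀ y ∈ M, ∀ z : N, y <• (inner (𝕜 := A) x (T z)) = 0) :
    ∀ z : N, T z = 0 := by
  intro z
  refine hMbot (T z) fun m hm => ?_
  set a := inner (𝕜 := A) m (T z) with ha
  have h0 : m <• a = 0 := hT0 m hm m hm z
  have h1 : star a * a = 0 := by
    have h2 : (inner (𝕜 := A) (T z) (m <• a) : A) = inner (𝕜 := A) (T z) (0 : N) :=
      congrArg _ h0
    have hz : inner (𝕜 := A) (T z) (0 : N) = 0 := by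
      have := CStarModuleRight.inner_add_right (A := A) (x := T z) (y := (0 : N)) (z := 0)
      simpa using this
    rw [CStarModuleRight.inner_op_smul_right, hz] at h2
    rwa [← CStarModuleRight.star_inner, ← ha] at h2
  exact (CStarRing.star_mul_self_eq_zero_iff a).mp h1
end
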